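/- Let S be a codimension-one smooth submanifold of M and f ∈ End(M,S) tangential with f ≢ id. In an adapted chart write f^1 − z^1 = h^1 (z^1)^{ν_f+1} (h^1 uniquely determined). If (Û, ẑ) is another adapted chart with ẑ^1 = a z^1, then a^{ν_f+1} ĥ^1 = a h^1 + (∂a/∂z^p) g^p mod I_S, where f^p − z^p = g^p (z^1)^{ν_f} for p = 2,…,n. -/

import Mathlib

/-!
Off `S`, dividing the defining identity of `ĥ¹` by `(z¹)^(ν+1)` and using
`f¹ = z¹ + h¹ (z¹)^(ν+1)` gives `(a ∘ f - a) / (z¹)^ν + (a ∘ f) h¹ = a^(ν+1) ĥ¹`.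
Tangentiality says `f - id = (z¹)^ν v` with `v = (h¹ z¹, g², …, gⁿ)` continuous, so by strict
differentiability of `a` the difference quotient tends to `da(v) = ∑ₚ (∂a/∂zᵖ) gᵖ` at points
of `S`; letting `z¹ → 0` gives the formula.
-/

open Filter Topology

abbrev Esp (n : ℕ) := Fin n → ℂ

open Asymptotics Function

theorem HasStrictFDerivAt.tendsto_inv_smul_sub {𝕜 E F α : Type*} [NontriviallyNormedField 𝕜]
    [NormedAddCommGroup E] [NormedSpace 𝕜 E] [NormedAddCommGroup F] [NormedSpace 𝕜 F]
    {a : E → F} {D : E →L[𝕜] F} {x : E} (ha : HasStrictFDerivAt a D x)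
    {l : Filter α} {p v : α → E} {s : α → 𝕜} {w : E}
    (hp : Tendsto p l (𝓝 x)) (hs : Tendsto s l (𝓝 0)) (hv : Tendsto v l (𝓝 w))
    (hs0 : ∀ᶠ t in l, s t ≠ 0) :
    Tendsto (fun t => (s t)⁻¹ • (a (p t + s t • v t) - a (p t))) l (𝓝 (D w)) := by
  have hq : Tendsto (fun t => p t + s t • v t) l (𝓝 x) := by
    simpa using hp.add (hs.smul hv)
  have hsv : (fun t => s t • v t) =O[l] s := by
    simpa using (isBigO_refl s l).smul (hv.isBigO_one 𝕜)
  have hrem : (fun t => a (p t + s t • v t) - a (p t) - D (s t • v t)) =o[l] s := by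
    have := ha.isLittleO.comp_tendsto (hq.prodMk_nhds hp)
    simp only [comp_def, add_sub_cancel_left] at this
    exact this.trans_isBigO hsv
  rw [← zero_add (D w)]
  refine (hrem.tendsto_inv_smul_nhds_zero.add ((D.continuous.tendsto w).comp hv)).congr' ?_
  filter_upwards [hs0] with t ht
  simp [map_smul, smul_sub, inv_smul_smul₀ ht]

theorem nhdsWithin_apply_ne_neBot {ι : Type*} {X : ι → Type*} [∀ i, TopologicalSpace (X i)]
    (x : ∀ i, X i) (i : ι) (c : X i) [(𝓝[≠] c).NeBot] :
    (𝓝[{y | y i ≠ c}] x).NeBot := by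
  rw [← mem_closure_iff_nhdsWithin_neBot]
  have hclosure := (isOpenMap_eval i).preimage_closure_eq_closure_preimage (continuous_apply i) {c}ᶜ
  rw [closure_compl_singleton, Set.preimage_univ] at hclosure
  exact hclosure ▸ Set.mem_univ x

theorem tendsto_nhds_of_eq_add_pow_smul {ι 𝕜 : Type*} [Fintype ι] [NontriviallyNormedField 𝕜]
    {f v : (ι → 𝕜) → ι → 𝕜} {x : ι → 𝕜} {i : ι} {ν : ℕ} (hν : ν ≠ 0) (hxi : x i = 0)
    (hv : ContinuousAt v x) (hfv : ∀ᶠ y in 𝓝 x, f y = y + y i ^ ν • v y) :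
    Tendsto f (𝓝 x) (𝓝 x) := by
  have := (continuousAt_id.add (((continuous_apply i).continuousAt.pow ν).smul hv)).tendsto
  simpa [hxi, hν] using this.congr' (hfv.mono fun y hy => hy.symm)

theorem tendsto_inv_pow_smul_sub_of_eq_add_pow_smul {ι 𝕜 F : Type*} [Fintype ι]
    [NontriviallyNormedField 𝕜] [NormedAddCommGroup F] [NormedSpace 𝕜 F]
    {a : (ι → 𝕜) → F} {D : (ι → 𝕜) →L[𝕜] F} {f v : (ι → 𝕜) → ι → 𝕜} {x : ι → 𝕜} {i : ι}
    {ν : ℕ} (ha : HasStrictFDerivAt a D x) (hν : ν ≠ 0) (hxi : x i = 0) (hv : ContinuousAt v x)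
    (hfv : ∀ᶠ y in 𝓝 x, f y = y + y i ^ ν • v y) :
    Tendsto (fun y => (y i ^ ν)⁻¹ • (a (f y) - a y)) (𝓝[{y | y i ≠ 0}] x) (𝓝 (D (v x))) := by
  have hs : Tendsto (fun y : ι → 𝕜 => y i ^ ν) (𝓝[{y | y i ≠ 0}] x) (𝓝 0) := by
    have : Tendsto (fun y : ι → 𝕜 => y i ^ ν) (𝓝 x) (𝓝 (x i ^ ν)) :=
      ((continuous_apply i).tendsto x).pow ν
    rw [hxi, zero_pow hν] at this
    exact this.mono_left nhdsWithin_le_nhds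
  have hs0 : ∀ᶠ y in 𝓝[{y | y i ≠ 0}] x, y i ^ ν ≠ 0 :=
    eventually_nhdsWithin_of_forall fun y hy => pow_ne_zero ν hy
  refine (ha.tendsto_inv_smul_sub (tendsto_nhdsWithin_of_tendsto_nhds tendsto_id) hs
    (hv.tendsto.mono_left nhdsWithin_le_nhds) hs0).congr' ?_
  filter_upwards [nhdsWithin_le_nhds hfv] with y hy
  rw [hy, id]

section AdaptedChart

variable {n : ℕ} [NeZero n] {ν : ℕ} {f : Esp n → Esp n} {a h hhat : Esp n → ℂ}
  {gp : Fin n → Esp n → ℂ} {y : Esp n}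

theorem Fin.one_le_val_iff_ne_zero (p : Fin n) : 1 ≤ (p : ℕ) ↔ p ≠ 0 :=
  Fin.val_pos_iff.trans (Fin.pos_iff_ne_zero' p)

theorem apply_eq_add_pow_smul (hh : f y 0 - y 0 = h y * y 0 ^ (ν + 1))
    (hg : ∀ p : Fin n, 1 ≤ (p : ℕ) → f y p - y p = gp p y * y 0 ^ ν) :
    f y = y + y 0 ^ ν • update (fun p => gp p y) 0 (h y * y 0) := by
  funext p
  rcases eq_or_ne p 0 with rfl | hp
  · simp only [Pi.add_apply, Pi.smul_apply, update_self, smul_eq_mul]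
    linear_combination hh
  · simp only [Pi.add_apply, Pi.smul_apply, update_of_ne hp, smul_eq_mul]
    linear_combination hg p ((Fin.one_le_val_iff_ne_zero p).2 hp)

theorem inv_pow_mul_sub_add_eq (hh : f y 0 - y 0 = h y * y 0 ^ (ν + 1))
    (hhhat : a (f y) * f y 0 - a y * y 0 = hhat y * (a y * y 0) ^ (ν + 1)) (hy : y 0 ≠ 0) :
    (y 0 ^ ν)⁻¹ * (a (f y) - a y) + a (f y) * h y = a y ^ (ν + 1) * hhat y := by
  rw [sub_eq_iff_eq_add'] at hh
  rw [hh] at hhhat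
  have hyν := pow_ne_zero ν hy
  rw [inv_mul_eq_div, div_add' _ _ _ hyν, div_eq_iff hyν]
  refine mul_left_cancel₀ hy ?_
  linear_combination hhhat

theorem ContinuousLinearMap.apply_update_zero {R : Type*} [CommSemiring R] [TopologicalSpace R]
    (D : (Fin n → R) →L[R] R) (g : Fin n → R) :
    D (update g 0 0) = ∑ p ∈ Finset.univ.filter (fun p : Fin n => 1 ≤ (p : ℕ)),
      D (Pi.single p 1) * g p := by
  conv_lhs => rw [pi_eq_sum_univ' (update g 0 0), map_sum]
  rw [Finset.sum_filter]
  refine Finset.sum_congr rfl fun p _ => ?_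
  rcases eq_or_ne p 0 with rfl | hp
  · simp
  · simp [(Fin.one_le_val_iff_ne_zero p).2 hp, update_of_ne hp, mul_comm]

end AdaptedChart

theorem statement_10_general {n : ℕ} [NeZero n] (ν : ℕ) (hν : 1 ≤ ν)
    (U : Set (Esp n)) (hU : IsOpen U)
    (f : Esp n → Esp n)
    (a : Esp n → ℂ) (ha : AnalyticOnNhd ℂ a U)
    (h : Esp n → ℂ) (gp : Fin n → Esp n → ℂ) (hhat : Esp n → ℂ)
    (hha : AnalyticOnNhd ℂ h U) (hgpa : ∀ p, AnalyticOnNhd ℂ (gp p) U)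
    (hhata : AnalyticOnNhd ℂ hhat U)
    (hh : ∀ x ∈ U, f x 0 - x 0 = h x * (x 0) ^ (ν + 1))
    (hg : ∀ p : Fin n, 1 ≤ (p : ℕ) → ∀ x ∈ U, f x p - x p = gp p x * (x 0) ^ ν)
    (hhhat : ∀ x ∈ U, a (f x) * f x 0 - a x * x 0 = hhat x * (a x * x 0) ^ (ν + 1)) :
    ∀ x ∈ U, x 0 = 0 →
      (a x) ^ (ν + 1) * hhat x =
        a x * h x +
          ∑ p ∈ Finset.univ.filter (fun p : Fin n => 1 ≤ (p : ℕ)),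
            (fderiv ℂ a x) (Pi.single p 1) * gp p x := by
  intro x hx hx0
  have hcont {φ : Esp n → ℂ} (hφ : AnalyticOnNhd ℂ φ U) : ContinuousAt φ x :=
    (hφ x hx).continuousAt
  set v : Esp n → Esp n := fun y => update (fun p => gp p y) 0 (h y * y 0)
  have hv : ContinuousAt v x := (continuousAt_pi.2 fun p => hcont (hgpa p)).update 0
    ((hcont hha).mul (continuous_apply 0).continuousAt)
  have hfv : ∀ᶠ y in 𝓝 x, f y = y + y 0 ^ ν • v y := by
    filter_upwards [hU.mem_nhds hx] with y hy
    exact apply_eq_add_pow_smul (hh y hy) (fun p hp => hg p hp y hy)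
  have hν0 : ν ≠ 0 := Nat.one_le_iff_ne_zero.1 hν
  have hf := tendsto_nhds_of_eq_add_pow_smul hν0 hx0 hv hfv
  have hslope :=
    tendsto_inv_pow_smul_sub_of_eq_add_pow_smul (ha x hx).hasStrictFDerivAt hν0 hx0 hv hfv
  set L := 𝓝[{y : Esp n | y 0 ≠ 0}] x
  have hlhs := hslope.add (((hcont ha).tendsto.comp hf).mul (hcont hha).tendsto
    |>.mono_left nhdsWithin_le_nhds)
  have hrhs : Tendsto (fun y => a y ^ (ν + 1) * hhat y) L (𝓝 (a x ^ (ν + 1) * hhat x)) :=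
    (((hcont ha).tendsto.pow _).mul (hcont hhata).tendsto).mono_left nhdsWithin_le_nhds
  have hsides : ∀ᶠ y in L,
      (y 0 ^ ν)⁻¹ * (a (f y) - a y) + a (f y) * h y = a y ^ (ν + 1) * hhat y := by
    filter_upwards [nhdsWithin_le_nhds (hU.mem_nhds hx), self_mem_nhdsWithin] with y hy hy0
    exact inv_pow_mul_sub_add_eq (hh y hy) (hhhat y hy) hy0
  have : L.NeBot := nhdsWithin_apply_ne_neBot x 0 0
  have hvx : v x = update (fun p => gp p x) 0 0 := by simp [v, hx0]
  rw [← tendsto_nhds_unique (hlhs.congr' hsides) hrhs, hvx, ContinuousLinearMap.apply_update_zero,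
    add_comm]

theorem statement_10 {n : ℕ} [NeZero n] (hn : 2 ≤ n) (ν : ℕ) (hν : 1 ≤ ν)
    (U : Set (Esp n)) (hU : IsOpen U)
    (f : Esp n → Esp n) (hfa : AnalyticOnNhd ℂ f U) (hmaps : Set.MapsTo f U U)
    (hfix : ∀ x ∈ U, x 0 = 0 → f x = x)
    (a : Esp n → ℂ) (ha : AnalyticOnNhd ℂ a U) (hane : ∀ x ∈ U, a x ≠ 0)
    (h g : Esp n → ℂ) (gp : Fin n → Esp n → ℂ) (hhat : Esp n → ℂ)
    (hha : AnalyticOnNhd ℂ h U) (hgpa : ∀ p, AnalyticOnNhd ℂ (gp p) U)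
    (hhata : AnalyticOnNhd ℂ hhat U)
    (hh : ∀ x ∈ U, f x 0 - x 0 = h x * (x 0) ^ (ν + 1))
    (hg : ∀ p : Fin n, 1 ≤ (p : ℕ) → ∀ x ∈ U, f x p - x p = gp p x * (x 0) ^ ν)
    (hhhat : ∀ x ∈ U, a (f x) * f x 0 - a x * x 0 = hhat x * (a x * x 0) ^ (ν + 1)) :
    ∀ x ∈ U, x 0 = 0 →
      (a x) ^ (ν + 1) * hhat x =
        a x * h x +
          ∑ p ∈ Finset.univ.filter (fun p : Fin n => 1 ≤ (p : ℕ)),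
            (fderiv ℂ a x) (Pi.single p 1) * gp p x :=
  statement_10_general ν hν U hU f a ha h gp hhat hha hgpa hhata hh hg hhhat
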